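/- Let J be the two-sided ideal of A generated by the pre-Lie associator elements x·(y·z) − (x·y)·z − y·(x·z) + (y·x)·z for x, y, z ∈ A, and take T(J) and O(J) with respect to the order ≼. Then O(J) is exactly the set of monomials σ ∈ FreeMagma E having nondecreasing branches. -/

import Mathlib

/-- The additive extension of the degree function `d : E → ℕ` to the free magma. -/
def FreeMagma.mdeg {E : Type*} (d : E → ℕ) : FreeMagma E → ℕ
  | .of a => d a
  | .mul x y => FreeMagma.mdeg d x + FreeMagma.mdeg d y

/-- The number of branches: `b a = 0` on generators and `b (x·y) = b y + 1`. -/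
def FreeMagma.nbranch {E : Type*} : FreeMagma E → ℕ
  | .of _ => 0
  | .mul _ y => FreeMagma.nbranch y + 1

/-- The list of branches: `ℓ a = []` and `ℓ (x·y) = x :: ℓ y`. -/
def FreeMagma.branchList {E : Type*} : FreeMagma E → List (FreeMagma E)
  | .of _ => []
  | .mul x y => x :: FreeMagma.branchList y

/-- The root: `r a = a` and `r (x·y) = r y`. -/
def FreeMagma.rootOf {E : Type*} : FreeMagma E → E
  | .of a => a
  | .mul _ y => FreeMagma.rootOf y

/-- The strict order `≺` on the free magma (planar `E`-decorated rooted trees):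
compare by degree, then by number of branches, then lexicographically on the list of
branches, then by the root decoration. -/
inductive MagmaLt {E : Type*} [LT E] (d : E → ℕ) : FreeMagma E → FreeMagma E → Prop
  | deg {σ τ : FreeMagma E} : FreeMagma.mdeg d σ < FreeMagma.mdeg d τ → MagmaLt d σ τ
  | branches {σ τ : FreeMagma E} : FreeMagma.mdeg d σ = FreeMagma.mdeg d τ →
      FreeMagma.nbranch σ < FreeMagma.nbranch τ → MagmaLt d σ τ
  | lex {σ τ : FreeMagma E} : FreeMagma.mdeg d σ = FreeMagma.mdeg d τ →
      FreeMagma.nbranch σ = FreeMagma.nbranch τ →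
      List.Lex (MagmaLt d) (FreeMagma.branchList σ) (FreeMagma.branchList τ) → MagmaLt d σ τ
  | root {σ τ : FreeMagma E} : FreeMagma.mdeg d σ = FreeMagma.mdeg d τ →
      FreeMagma.nbranch σ = FreeMagma.nbranch τ →
      FreeMagma.branchList σ = FreeMagma.branchList τ →
      FreeMagma.rootOf σ < FreeMagma.rootOf τ → MagmaLt d σ τ

/-- The monomial corresponding to an element of the free magma, inside the free
non-unital non-associative algebra. -/
noncomputable def magmaMonomial {E : Type*} (z : FreeMagma E) :
    FreeNonUnitalNonAssocAlgebra ℚ E :=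
  MonoidAlgebra.single z (1 : ℚ)

/-- A ℚ-submodule of the magma algebra which is stable under left and right
multiplication by arbitrary elements: a two-sided ideal. -/
def IsTwoSidedIdealSubmodule {E : Type*}
    (I : Submodule ℚ (FreeNonUnitalNonAssocAlgebra ℚ E)) : Prop :=
  ∀ a x : FreeNonUnitalNonAssocAlgebra ℚ E, x ∈ I → a * x ∈ I ∧ x * a ∈ I

/-- The smallest two-sided ideal (ℚ-submodule closed under left and right multiplication)
containing a given set. -/
noncomputable def twoSidedIdealGen {E : Type*} (S : Set (FreeNonUnitalNonAssocAlgebra ℚ E)) :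
    Submodule ℚ (FreeNonUnitalNonAssocAlgebra ℚ E) :=
  sInf {I | IsTwoSidedIdealSubmodule I ∧ S ⊆ I}

/-- `z` is the `≼`-maximal term of `f`: it lies in the support of `f` and strictly
dominates every other monomial of the support. -/
def IsMaxTermWrt {E : Type*} [LT E] (d : E → ℕ)
    (f : FreeNonUnitalNonAssocAlgebra ℚ E) (z : FreeMagma E) : Prop :=
  z ∈ f.coeff.support ∧ ∀ w ∈ f.coeff.support, w ≠ z → MagmaLt d w z

/-- `T(I)` with respect to the order `≼`: the set of maximal terms of (nonzero)
elements of `I`. -/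
def maxTermSetWrt {E : Type*} [LT E] (d : E → ℕ)
    (I : Submodule ℚ (FreeNonUnitalNonAssocAlgebra ℚ E)) : Set (FreeMagma E) :=
  {z | ∃ f ∈ I, IsMaxTermWrt d f z}

/-- The set of pre-Lie associator elements `x·(y·z) − (x·y)·z − y·(x·z) + (y·x)·z`
for `x, y, z` in the magma algebra. -/
def preLieAssocSet (E : Type*) : Set (FreeNonUnitalNonAssocAlgebra ℚ E) :=
  {w | ∃ x y z : FreeNonUnitalNonAssocAlgebra ℚ E,
    w = x * (y * z) - (x * y) * z - y * (x * z) + (y * x) * z}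

/-- A monomial has nondecreasing branches if at every vertex the branches are displayed
in `≼`-nondecreasing order from left to right. -/
def HasNondecreasingBranches {E : Type*} [LT E] (d : E → ℕ) : FreeMagma E → Prop
  | .of _ => True
  | .mul x y => HasNondecreasingBranches d x ∧ HasNondecreasingBranches d y ∧
      ∀ u v : FreeMagma E, y = u * v → (MagmaLt d x u ∨ x = u)

/-!
A monomial whose branches are not nondecreasing contains a vertex `x * (u * v)` with `u ≺ x`.
That vertex is the leading term of the associator `x(uv) - (xu)v - u(xv) + (ux)v`, and leading
terms survive multiplication by monomials, so the monomial lies in `T(J)`.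

Conversely, the span of the monomials with nondecreasing branches carries a product `⋆`: on two
such monomials it keeps their magma product when that is normal, and rewrites `σ (u v)` with
`u ≺ σ` as `(σ ⋆ u) ⋆ v + u ⋆ (σ ⋆ v) - (u ⋆ σ) ⋆ v`. Finite degree fibres make `≺` well
founded, so this recursion terminates, and an induction along `≺` shows that `⋆` is pre-Lie.
Replacing every magma product by `⋆` therefore gives a linear map that kills `J`, fixes the
monomials with nondecreasing branches and only produces monomials `≼` its input. It would keep
the leading coefficient of an element of `J` whose leading term has nondecreasing branches, so
no such element exists.
-/

namespace List

variable {α : Type*} {r : α → α → Prop}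

theorem Lex.trans_of_forall_mem {l₁ l₂ l₃ : List α}
    (H : ∀ a ∈ l₁, ∀ b ∈ l₂, ∀ c ∈ l₃, r a b → r b c → r a c)
    (h₁ : Lex r l₁ l₂) (h₂ : Lex r l₂ l₃) : Lex r l₁ l₃ := by
  induction h₁ generalizing l₃ with
  | nil => cases h₂ <;> exact .nil
  | cons h ih =>
    cases h₂ with
    | cons h' => exact .cons (ih (fun a ha b hb c hc => H a (by simp [ha]) b (by simp [hb]) c
        (by simp [hc])) h')
    | rel hab => exact .rel hab
  | rel hab =>
    cases h₂ with
    | cons => exact .rel hab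
    | rel hbc => exact .rel (H _ (by simp) _ (by simp) _ (by simp) hab hbc)

theorem Lex.irrefl_of_forall_mem {l : List α} (H : ∀ a ∈ l, ¬ r a a) : ¬ Lex r l l := by
  intro h
  induction l with
  | nil => cases h
  | cons a t ih =>
    cases h with
    | cons h => exact ih (fun b hb => H b (by simp [hb])) h
    | rel h => exact H a (by simp) h

theorem Lex.trichotomous_of_forall_mem :
    ∀ l₁ l₂ : List α, (∀ a ∈ l₁, ∀ b ∈ l₂, r a b ∨ a = b ∨ r b a) →
      Lex r l₁ l₂ ∨ l₁ = l₂ ∨ Lex r l₂ l₁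
  | [], [], _ => .inr (.inl rfl)
  | [], _ :: _, _ => .inl .nil
  | _ :: _, [], _ => .inr (.inr .nil)
  | a :: t₁, b :: t₂, H => by
    rcases H a (by simp) b (by simp) with h | rfl | h
    · exact .inl (.rel h)
    · rcases trichotomous_of_forall_mem t₁ t₂
        (fun p hp q hq => H p (by simp [hp]) q (by simp [hq])) with h | rfl | h
      · exact .inl (.cons h)
      · exact .inr (.inl rfl)
      · exact .inr (.inr (.cons h))
    · exact .inr (.inr (.rel h))

end List

namespace Finsupp

variable {R M α β γ : Type*}

theorem map_mem_of_forall_single_mem [Semiring R] [AddCommMonoid M] [Module R M]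
    (L : (α →₀ R) →ₗ[R] M) {N : Submodule R M} {f : α →₀ R}
    (h : ∀ a ∈ f.support, L (single a 1) ∈ N) : L f ∈ N := by
  rw [← f.sum_single, map_finsuppSum]
  refine N.sum_mem fun a ha => show L (single a (f a)) ∈ N from ?_
  rw [← smul_single_one, map_smul]
  exact N.smul_mem _ (h a ha)

theorem map_eq_zero_of_forall_single_eq_zero [Semiring R] [AddCommMonoid M] [Module R M]
    (L : (α →₀ R) →ₗ[R] M) {f : α →₀ R} (h : ∀ a ∈ f.support, L (single a 1) = 0) :
    L f = 0 := by
  simpa using map_mem_of_forall_single_mem L (N := ⊥) (by simpa using h)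

theorem apply₃_eq_zero_of_forall_single [CommSemiring R] [AddCommMonoid M] [Module R M]
    (Φ : (α →₀ R) →ₗ[R] (β →₀ R) →ₗ[R] (γ →₀ R) →ₗ[R] M) {f : α →₀ R} {g : β →₀ R}
    {h : γ →₀ R} (H : ∀ a ∈ f.support, ∀ b ∈ g.support, ∀ c ∈ h.support,
      Φ (single a 1) (single b 1) (single c 1) = 0) :
    Φ f g h = 0 := by
  refine map_eq_zero_of_forall_single_eq_zero ((Φ.flip g).flip h) fun a ha => ?_
  refine map_eq_zero_of_forall_single_eq_zero ((Φ (single a 1)).flip h) fun b hb => ?_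
  exact map_eq_zero_of_forall_single_eq_zero (Φ (single a 1) (single b 1)) (H a ha b hb)

end Finsupp

namespace MonoidAlgebra

variable {k G : Type*} [Semiring k] [Mul G]

theorem coeff_single_mul_eq_mapDomain (σ : G) (f : MonoidAlgebra k G) :
    (single σ (1 : k) * f).coeff = f.coeff.mapDomain (σ * ·) := by
  rw [mul_def, coeff_single, Finsupp.sum_single_index (by simp)]
  simp [Finsupp.mapDomain]

theorem coeff_mul_single_eq_mapDomain (σ : G) (f : MonoidAlgebra k G) :
    (f * single σ (1 : k)).coeff = f.coeff.mapDomain (· * σ) := by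
  simp [mul_def, coeff_single, Finsupp.mapDomain]

end MonoidAlgebra

namespace LinearMap

variable {R M : Type*} [CommRing R] [AddCommGroup M] [Module R M]

def preLieAssoc (μ : M →ₗ[R] M →ₗ[R] M) : M →ₗ[R] M →ₗ[R] M →ₗ[R] M :=
  mk₂ R (fun a b => μ a ∘ₗ μ b - μ (μ a b) - μ b ∘ₗ μ a + μ (μ b a))
    (by intros; ext; simp only [map_add, add_apply, sub_apply, comp_apply]; abel)
    (by intros; ext; simp only [map_smul, smul_apply, add_apply, sub_apply, comp_apply,
      smul_sub, smul_add])
    (by intros; ext; simp only [map_add, add_apply, sub_apply, comp_apply]; abel)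
    (by intros; ext; simp only [map_smul, smul_apply, add_apply, sub_apply, comp_apply,
      smul_sub, smul_add])

variable (μ : M →ₗ[R] M →ₗ[R] M)

@[simp] theorem preLieAssoc_apply (a b c : M) :
    μ.preLieAssoc a b c = μ a (μ b c) - μ (μ a b) c - μ b (μ a c) + μ (μ b a) c := by
  simp [preLieAssoc]

theorem preLieAssoc_swap (a b c : M) : μ.preLieAssoc b a c = -μ.preLieAssoc a b c := by
  simp only [preLieAssoc_apply]; abel

theorem preLieAssoc_self (a c : M) : μ.preLieAssoc a a c = 0 := by
  simp only [preLieAssoc_apply]; abel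

theorem preLieAssoc_apply_mul (x y u v : M) :
    μ.preLieAssoc x y (μ u v) =
      μ x (μ.preLieAssoc y u v) - μ y (μ.preLieAssoc x u v)
      + μ.preLieAssoc x (μ y u) v - μ.preLieAssoc x (μ u y) v + μ.preLieAssoc x u (μ y v)
      - μ.preLieAssoc y (μ x u) v + μ.preLieAssoc y (μ u x) v - μ.preLieAssoc y u (μ x v)
      - μ.preLieAssoc (μ x y) u v + μ.preLieAssoc (μ y x) u v + μ u (μ.preLieAssoc x y v)
      + μ (μ.preLieAssoc x y u) v + μ (μ.preLieAssoc u x y) v - μ (μ.preLieAssoc u y x) v := by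
  simp only [preLieAssoc_apply, map_add, map_sub, add_apply, sub_apply]
  abel

end LinearMap

namespace FreeMagma

variable {E : Type*}

@[simp] theorem mdeg_mul (d : E → ℕ) (x y : FreeMagma E) :
    mdeg d (x * y) = mdeg d x + mdeg d y := rfl
@[simp] theorem nbranch_mul (x y : FreeMagma E) : nbranch (x * y) = nbranch y + 1 := rfl
@[simp] theorem branchList_mul (x y : FreeMagma E) : branchList (x * y) = x :: branchList y := rfl
@[simp] theorem rootOf_mul (x y : FreeMagma E) : rootOf (x * y) = rootOf y := rfl

theorem mul_inj_iff {x y x' y' : FreeMagma E} : x * y = x' * y' ↔ x = x' ∧ y = y' :=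
  ⟨fun h => by cases h; exact ⟨rfl, rfl⟩, fun ⟨hx, hy⟩ => hx ▸ hy ▸ rfl⟩

theorem mdeg_pos {d : E → ℕ} (hd : ∀ a, 1 ≤ d a) (σ : FreeMagma E) : 1 ≤ mdeg d σ := by
  induction σ with
  | ih1 a => exact hd a
  | ih2 x y _ _ => simp only [mdeg_mul]; omega

theorem length_lt_of_mem_branchList {a σ : FreeMagma E} (h : a ∈ branchList σ) :
    a.length < σ.length := by
  induction σ with
  | ih1 b => simp [branchList] at h
  | ih2 x y _ ihy =>
    have := x.length_pos
    have := y.length_pos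
    simp only [branchList_mul, List.mem_cons] at h
    rcases h with rfl | h
    · simp; omega
    · have := ihy h; simp; omega

theorem eq_of_branchList_eq_of_rootOf_eq {σ τ : FreeMagma E}
    (hl : branchList σ = branchList τ) (hr : rootOf σ = rootOf τ) : σ = τ := by
  induction σ generalizing τ with
  | ih1 a =>
    cases τ with
    | of b => exact congrArg of hr
    | mul => simp [branchList] at hl
  | ih2 x y _ ihy =>
    cases τ with
    | of => simp [branchList] at hl
    | mul x' y' =>
      simp only [branchList_mul, rootOf_mul, List.cons.injEq, mul_eq] at hl hr ⊢
      rw [hl.1, ihy hl.2 hr]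

theorem finite_setOf_mdeg_le {d : E → ℕ} (hd : ∀ a, 1 ≤ d a)
    (hfib : ∀ n, {a : E | d a = n}.Finite) (n : ℕ) : {σ : FreeMagma E | mdeg d σ ≤ n}.Finite := by
  induction n using Nat.strong_induction_on with
  | _ n ih =>
    have hgen : {a : E | d a ≤ n}.Finite :=
      ((Set.finite_Iic n).biUnion fun k _ => hfib k).subset fun a ha => by simpa using ha
    rcases Nat.eq_zero_or_pos n with rfl | hn
    · refine Set.finite_empty.subset fun σ hσ => ?_
      have := mdeg_pos hd σ
      simp only [Set.mem_ofPred_eq] at hσ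
      omega
    refine ((hgen.image of).union ((ih (n - 1) (by omega)).image2 (· * ·)
      (ih (n - 1) (by omega)))).subset fun σ hσ => ?_
    simp only [Set.mem_ofPred_eq] at hσ
    cases σ with
    | of a => exact .inl ⟨a, hσ, rfl⟩
    | mul x y =>
      have := mdeg_pos hd x
      have := mdeg_pos hd y
      simp only [mul_eq, mdeg_mul] at hσ
      exact .inr ⟨x, by simp only [Set.mem_ofPred_eq]; omega, y,
        by simp only [Set.mem_ofPred_eq]; omega, rfl⟩

end FreeMagma

namespace MagmaLt

open FreeMagma

variable {E : Type*} [LinearOrder E] {d : E → ℕ}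

theorem mdeg_le {σ τ : FreeMagma E} (h : MagmaLt d σ τ) : mdeg d σ ≤ mdeg d τ := by
  cases h <;> omega

theorem nbranch_le {σ τ : FreeMagma E} (h : MagmaLt d σ τ) (hdeg : mdeg d σ = mdeg d τ) :
    nbranch σ ≤ nbranch τ := by
  cases h <;> omega

theorem irrefl (σ : FreeMagma E) : ¬ MagmaLt d σ σ := by
  induction hn : σ.length using Nat.strong_induction_on generalizing σ with
  | _ n ih =>
    intro h
    cases h with
    | deg h | branches _ h | root _ _ _ h => exact lt_irrefl _ h
    | lex _ _ h =>
      exact List.Lex.irrefl_of_forall_mem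
        (fun a ha => ih _ (hn ▸ length_lt_of_mem_branchList ha) a rfl) h

theorem trans {σ τ ρ : FreeMagma E} (h₁ : MagmaLt d σ τ) (h₂ : MagmaLt d τ ρ) :
    MagmaLt d σ ρ := by
  induction hn : σ.length + τ.length + ρ.length using Nat.strong_induction_on
    generalizing σ τ ρ with
  | _ n ih =>
    have d₁ := h₁.mdeg_le
    have d₂ := h₂.mdeg_le
    by_cases hdeg : mdeg d σ < mdeg d ρ
    · exact .deg hdeg
    have b₁ := h₁.nbranch_le (by omega)
    have b₂ := h₂.nbranch_le (by omega)
    by_cases hbr : nbranch σ < nbranch ρ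
    · exact .branches (by omega) hbr
    cases h₁ with
    | deg | branches => omega
    | lex _ _ hl₁ =>
      cases h₂ with
      | deg | branches => omega
      | lex _ _ hl₂ =>
        refine .lex (by omega) (by omega) (hl₁.trans_of_forall_mem ?_ hl₂)
        intro a ha b hb c hc hab hbc
        have := length_lt_of_mem_branchList ha
        have := length_lt_of_mem_branchList hb
        have := length_lt_of_mem_branchList hc
        exact ih _ (by omega) hab hbc rfl
      | root _ _ hl₂ => exact .lex (by omega) (by omega) (hl₂ ▸ hl₁)
    | root _ _ hl₁ hr₁ =>
      cases h₂ with
      | deg | branches => omega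
      | lex _ _ hl₂ => exact .lex (by omega) (by omega) (hl₁ ▸ hl₂)
      | root _ _ hl₂ hr₂ => exact .root (by omega) (by omega) (hl₁.trans hl₂) (hr₁.trans hr₂)

theorem trichotomous (σ τ : FreeMagma E) : MagmaLt d σ τ ∨ σ = τ ∨ MagmaLt d τ σ := by
  induction hn : σ.length + τ.length using Nat.strong_induction_on generalizing σ τ with
  | _ n ih =>
    rcases lt_trichotomy (mdeg d σ) (mdeg d τ) with hd | hd | hd
    · exact .inl (.deg hd)
    swap
    · exact .inr (.inr (.deg hd))
    rcases lt_trichotomy (nbranch σ) (nbranch τ) with hb | hb | hb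
    · exact .inl (.branches hd hb)
    swap
    · exact .inr (.inr (.branches hd.symm hb))
    have hbranches : ∀ a ∈ branchList σ, ∀ b ∈ branchList τ,
        MagmaLt d a b ∨ a = b ∨ MagmaLt d b a := fun a ha b hb => by
      have := length_lt_of_mem_branchList ha
      have := length_lt_of_mem_branchList hb
      exact ih _ (by omega) a b rfl
    rcases List.Lex.trichotomous_of_forall_mem _ _ hbranches with hl | hl | hl
    · exact .inl (.lex hd hb hl)
    swap
    · exact .inr (.inr (.lex hd.symm hb.symm hl))
    rcases lt_trichotomy (rootOf σ) (rootOf τ) with hr | hr | hr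
    · exact .inl (.root hd hb hl hr)
    · exact .inr (.inl (eq_of_branchList_eq_of_rootOf_eq hl hr))
    · exact .inr (.inr (.root hd.symm hb.symm hl.symm hr))

theorem mul_left {τ ρ : FreeMagma E} (h : MagmaLt d τ ρ) (σ : FreeMagma E) :
    MagmaLt d (σ * τ) (σ * ρ) := by
  cases h with
  | deg h => exact .deg (by simp; omega)
  | branches h h' => exact .branches (by simp; omega) (by simp; omega)
  | lex h h' hl => exact .lex (by simp; omega) (by simp; omega) (by simpa using List.Lex.cons hl)
  | root h h' hl hr => exact .root (by simp; omega) (by simp; omega) (by simp [hl]) (by simpa)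

theorem mul_right {σ τ : FreeMagma E} (h : MagmaLt d σ τ) (ρ : FreeMagma E) :
    MagmaLt d (σ * ρ) (τ * ρ) := by
  rcases h.mdeg_le.lt_or_eq with hlt | heq
  · exact .deg (by simp; omega)
  · exact .lex (by simp; omega) (by simp) (by simpa using List.Lex.rel h)

theorem mul_mul_swap {a b : FreeMagma E} (h : MagmaLt d a b) (c : FreeMagma E) :
    MagmaLt d (a * (b * c)) (b * (a * c)) :=
  .lex (by simp; omega) (by simp) (by simpa using List.Lex.rel h)

theorem wellFounded (hd : ∀ a, 1 ≤ d a) (hfib : ∀ n, {a : E | d a = n}.Finite) :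
    WellFounded (MagmaLt d) := by
  have hfin (σ : FreeMagma E) : {τ | MagmaLt d τ σ}.Finite :=
    (finite_setOf_mdeg_le hd hfib (mdeg d σ)).subset fun τ hτ => mdeg_le hτ
  refine Subrelation.wf (fun {σ τ} h => ?_) (InvImage.wf (fun σ => (hfin σ).toFinset.card)
    Nat.lt_wfRel.wf)
  refine Finset.card_lt_card ⟨fun ρ hρ => ?_, fun hsub => irrefl (d := d) σ ?_⟩
  · simp only [Set.Finite.mem_toFinset, Set.mem_ofPred_eq] at hρ ⊢
    exact hρ.trans h
  · simpa using hsub (by simpa using h)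

end MagmaLt

def MagmaLe {E : Type*} [LT E] (d : E → ℕ) (σ τ : FreeMagma E) : Prop :=
  MagmaLt d σ τ ∨ σ = τ

namespace MagmaLe

open FreeMagma

variable {E : Type*} [LinearOrder E] {d : E → ℕ}

theorem refl (σ : FreeMagma E) : MagmaLe d σ σ := .inr rfl

theorem trans {σ τ ρ : FreeMagma E} (h₁ : MagmaLe d σ τ) (h₂ : MagmaLe d τ ρ) :
    MagmaLe d σ ρ := by
  rcases h₁ with h₁ | rfl
  · rcases h₂ with h₂ | rfl
    exacts [.inl (h₁.trans h₂), .inl h₁]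
  · exact h₂

theorem trans_lt {σ τ ρ : FreeMagma E} (h₁ : MagmaLe d σ τ) (h₂ : MagmaLt d τ ρ) :
    MagmaLt d σ ρ := by
  rcases h₁ with h₁ | rfl
  exacts [h₁.trans h₂, h₂]

theorem not_lt {σ τ : FreeMagma E} (h : MagmaLe d σ τ) : ¬ MagmaLt d τ σ :=
  fun h' => MagmaLt.irrefl σ (h.trans_lt h')

theorem mul_mul {σ τ σ' τ' : FreeMagma E} (h : MagmaLe d σ σ') (h' : MagmaLe d τ τ') :
    MagmaLe d (σ * τ) (σ' * τ') := by
  have h₁ : MagmaLe d (σ * τ) (σ' * τ) := by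
    rcases h with h | rfl
    exacts [.inl (h.mul_right τ), refl _]
  refine h₁.trans ?_
  rcases h' with h' | rfl
  exacts [.inl (h'.mul_left σ'), refl _]

theorem lt_of_not_le {σ τ : FreeMagma E} (h : ¬ MagmaLe d σ τ) : MagmaLt d τ σ := by
  rcases MagmaLt.trichotomous (d := d) σ τ with h' | h' | h'
  exacts [absurd (.inl h') h, absurd (.inr h') h, h']

end MagmaLe

namespace HasNondecreasingBranches

open FreeMagma

variable {E : Type*} [LinearOrder E] {d : E → ℕ}

theorem left {x y : FreeMagma E} (h : HasNondecreasingBranches d (x * y)) :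
    HasNondecreasingBranches d x := h.1

theorem right {x y : FreeMagma E} (h : HasNondecreasingBranches d (x * y)) :
    HasNondecreasingBranches d y := h.2.1

theorem mul_of {x : FreeMagma E} (hx : HasNondecreasingBranches d x) (a : E) :
    HasNondecreasingBranches d (x * of a) :=
  ⟨hx, trivial, fun _ _ h => by cases h⟩

theorem mul_mul_iff {x u v : FreeMagma E} :
    HasNondecreasingBranches d (x * (u * v)) ↔
      HasNondecreasingBranches d x ∧ HasNondecreasingBranches d (u * v) ∧ MagmaLe d x u := by
  refine ⟨fun h => ⟨h.1, h.2.1, h.2.2 u v rfl⟩, fun ⟨hx, huv, hle⟩ => ⟨hx, huv, ?_⟩⟩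
  intro u' v' h
  rw [mul_inj_iff] at h
  exact h.1 ▸ hle

theorem exists_lt_of_not_mul {x y : FreeMagma E} (hx : HasNondecreasingBranches d x)
    (hy : HasNondecreasingBranches d y) (h : ¬ HasNondecreasingBranches d (x * y)) :
    ∃ u v, y = u * v ∧ MagmaLt d u x := by
  cases y with
  | of a => exact absurd (hx.mul_of a) h
  | mul u v =>
    rw [mul_eq, mul_mul_iff] at h
    exact ⟨u, v, rfl, MagmaLe.lt_of_not_le fun hle => h ⟨hx, hy, hle⟩⟩

end HasNondecreasingBranches

section LeadingTerms

open FreeMagma MonoidAlgebra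

variable {E : Type*}

theorem mem_twoSidedIdealGen {S : Set (FreeNonUnitalNonAssocAlgebra ℚ E)}
    {x : FreeNonUnitalNonAssocAlgebra ℚ E} :
    x ∈ twoSidedIdealGen S ↔ ∀ I, IsTwoSidedIdealSubmodule I → S ⊆ I → x ∈ I := by
  simp only [twoSidedIdealGen, Submodule.mem_sInf, Set.mem_ofPred_eq, and_imp]

theorem isTwoSidedIdealSubmodule_twoSidedIdealGen (S : Set (FreeNonUnitalNonAssocAlgebra ℚ E)) :
    IsTwoSidedIdealSubmodule (twoSidedIdealGen S) := fun a x hx =>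
  ⟨mem_twoSidedIdealGen.2 fun I hI hS => (hI a x (mem_twoSidedIdealGen.1 hx I hI hS)).1,
    mem_twoSidedIdealGen.2 fun I hI hS => (hI a x (mem_twoSidedIdealGen.1 hx I hI hS)).2⟩

theorem subset_twoSidedIdealGen (S : Set (FreeNonUnitalNonAssocAlgebra ℚ E)) :
    S ⊆ twoSidedIdealGen S := fun _ hs => mem_twoSidedIdealGen.2 fun _ _ hS => hS hs

variable [LinearOrder E] {d : E → ℕ}

theorem IsMaxTermWrt.mapDomain {f g : FreeNonUnitalNonAssocAlgebra ℚ E} {z : FreeMagma E}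
    (h : IsMaxTermWrt d f z) {φ : FreeMagma E → FreeMagma E} (hφ : φ.Injective)
    (hmono : ∀ a b, MagmaLt d a b → MagmaLt d (φ a) (φ b))
    (hg : g.coeff = f.coeff.mapDomain φ) : IsMaxTermWrt d g (φ z) := by
  have hsupp : g.coeff.support = f.coeff.support.image φ := by
    rw [hg, Finsupp.mapDomain_support_of_injective hφ]
  refine ⟨hsupp ▸ Finset.mem_image_of_mem φ h.1, fun w hw hne => ?_⟩
  obtain ⟨τ, hτ, rfl⟩ := Finset.mem_image.1 (hsupp ▸ hw)
  exact hmono τ z (h.2 τ hτ fun h' => hne (h' ▸ rfl))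

theorem IsMaxTermWrt.single_mul {f : FreeNonUnitalNonAssocAlgebra ℚ E} {z : FreeMagma E}
    (h : IsMaxTermWrt d f z) (σ : FreeMagma E) : IsMaxTermWrt d (single σ 1 * f) (σ * z) :=
  h.mapDomain (fun _ _ hab => (mul_inj_iff.1 hab).2) (fun _ _ hab => hab.mul_left σ)
    (coeff_single_mul_eq_mapDomain σ f)

theorem IsMaxTermWrt.mul_single {f : FreeNonUnitalNonAssocAlgebra ℚ E} {z : FreeMagma E}
    (h : IsMaxTermWrt d f z) (σ : FreeMagma E) : IsMaxTermWrt d (f * single σ 1) (z * σ) :=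
  h.mapDomain (fun _ _ hab => (mul_inj_iff.1 hab).1) (fun _ _ hab => hab.mul_right σ)
    (coeff_mul_single_eq_mapDomain σ f)

theorem isMaxTermWrt_single_add {z : FreeMagma E} {g : FreeNonUnitalNonAssocAlgebra ℚ E}
    (hg : ∀ w ∈ g.coeff.support, MagmaLt d w z) : IsMaxTermWrt d (single z 1 + g) z := by
  have hz : g.coeff z = 0 := Finsupp.notMem_support_iff.1 fun h => MagmaLt.irrefl z (hg z h)
  refine ⟨by simp [hz], fun w hw hne => hg w ?_⟩
  simpa [Finsupp.single_apply, Ne.symm hne] using hw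

theorem isMaxTermWrt_preLieAssoc {x u : FreeMagma E} (v : FreeMagma E) (hux : MagmaLt d u x) :
    IsMaxTermWrt d (single x 1 * (single u 1 * single v 1) - single x 1 * single u 1 * single v 1
      - single u 1 * (single x 1 * single v 1) + single u 1 * single x 1 * single v 1)
      (x * (u * v)) := by
  simp only [single_mul_single, mul_one]
  rw [show ∀ a b c e : FreeNonUnitalNonAssocAlgebra ℚ E, a - b - c + e = a + (e - b - c) by
    intros; abel]
  refine isMaxTermWrt_single_add fun w hw => ?_
  have hw' : w = u * x * v ∨ w = x * u * v ∨ w = u * (x * v) := by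
    by_contra! hne
    simp [Ne.symm hne.1, Ne.symm hne.2.1, Ne.symm hne.2.2] at hw
  rcases hw' with rfl | rfl | rfl
  · exact .branches (by simp; omega) (by simp)
  · exact .branches (by simp; omega) (by simp)
  · exact hux.mul_mul_swap v

theorem mem_maxTermSetWrt_of_not_hasNondecreasingBranches {σ : FreeMagma E}
    (h : ¬ HasNondecreasingBranches d σ) :
    σ ∈ maxTermSetWrt d (twoSidedIdealGen (preLieAssocSet E)) := by
  induction σ with
  | ih1 a => exact absurd trivial h
  | ih2 x y ihx ihy =>
    have hJ := isTwoSidedIdealSubmodule_twoSidedIdealGen (preLieAssocSet E)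
    by_cases hx : HasNondecreasingBranches d x
    swap
    · obtain ⟨f, hf, hmax⟩ := ihx hx
      exact ⟨_, (hJ _ f hf).2, hmax.mul_single y⟩
    by_cases hy : HasNondecreasingBranches d y
    swap
    · obtain ⟨f, hf, hmax⟩ := ihy hy
      exact ⟨_, (hJ _ f hf).1, hmax.single_mul x⟩
    obtain ⟨u, v, rfl, hux⟩ := hx.exists_lt_of_not_mul hy h
    exact ⟨_, subset_twoSidedIdealGen _ ⟨_, _, _, rfl⟩, isMaxTermWrt_preLieAssoc v hux⟩

end LeadingTerms

section NormalForm

open FreeMagma Finsupp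

variable {E : Type*} [LinearOrder E] {d : E → ℕ}

def reducedBelow (d : E → ℕ) (p : FreeMagma E) : Set (FreeMagma E) :=
  {ρ | HasNondecreasingBranches d ρ ∧ MagmaLe d ρ p ∧ mdeg d ρ = mdeg d p}

theorem reducedBelow_mono {p q : FreeMagma E} (hle : MagmaLe d q p)
    (hdeg : mdeg d q = mdeg d p) : reducedBelow d q ⊆ reducedBelow d p :=
  fun _ ⟨hρ, hρq, hdρ⟩ => ⟨hρ, hρq.trans hle, hdρ.trans hdeg⟩

theorem single_mem_supported_reducedBelow {p : FreeMagma E} (hp : HasNondecreasingBranches d p) :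
    single p 1 ∈ supported ℚ ℚ (reducedBelow d p) :=
  single_mem_supported ℚ 1 ⟨hp, .refl p, rfl⟩

/-- Answering disallowed recursive calls by `0` lets `mulNormalForm` be defined by well-founded
recursion although `rewriteStep` recurses on monomials taken from the results of recursive calls;
`mulNormalForm_mul_mul_of_lt` shows that no call is ever refused. -/
noncomputable def callBelow {p : FreeMagma E} (rec : ∀ q, MagmaLt d q p → FreeMagma E →₀ ℚ)
    (q : FreeMagma E) : FreeMagma E →₀ ℚ :=
  open Classical in if h : MagmaLt d q p then rec q h else 0

/-- The rewriting rule `σ (u v) ↦ (σ u) v + u (σ v) - (u σ) v`. -/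
noncomputable def rewriteStep :
    ∀ p : FreeMagma E, (∀ q, MagmaLt d q p → FreeMagma E →₀ ℚ) → FreeMagma E →₀ ℚ
  | FreeMagma.mul σ (FreeMagma.mul u v), call =>
    ((callBelow call (σ * u)).sum fun ρ c => c • callBelow call (ρ * v))
      + ((callBelow call (σ * v)).sum fun ρ c => c • callBelow call (u * ρ))
      - ((callBelow call (u * σ)).sum fun ρ c => c • callBelow call (ρ * v))
  | _, _ => 0

/-- The normal form of the product `σ ⋆ τ` of two normal monomials, indexed by `p = σ * τ`. -/
noncomputable def mulNormalForm (hwf : WellFounded (MagmaLt d)) (p : FreeMagma E) :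
    FreeMagma E →₀ ℚ :=
  open Classical in
  hwf.fix (fun p rec => if HasNondecreasingBranches d p then single p 1 else rewriteStep p rec) p

variable (hwf : WellFounded (MagmaLt d))

theorem mulNormalForm_eq (p : FreeMagma E) :
    mulNormalForm hwf p = open Classical in if HasNondecreasingBranches d p then single p 1
      else rewriteStep (d := d) p fun q _ => mulNormalForm hwf q :=
  hwf.fix_eq _ p

theorem mulNormalForm_of_hasNondecreasingBranches {p : FreeMagma E}
    (hp : HasNondecreasingBranches d p) : mulNormalForm hwf p = single p 1 := by
  rw [mulNormalForm_eq, if_pos hp]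

theorem mulNormalForm_mem (p : FreeMagma E) :
    mulNormalForm hwf p ∈ supported ℚ ℚ (reducedBelow d p) := by
  induction p using hwf.induction with
  | _ p ih =>
  rw [mulNormalForm_eq]
  split_ifs with hp
  · exact single_mem_supported_reducedBelow hp
  set rec : ∀ q, MagmaLt d q p → FreeMagma E →₀ ℚ := fun q _ => mulNormalForm hwf q
  have hcall (q : FreeMagma E) : callBelow rec q ∈ supported ℚ ℚ (reducedBelow d q) := by
    unfold callBelow
    split_ifs with h
    exacts [ih q h, zero_mem _]
  have hcall_of_mdeg_eq (q : FreeMagma E) (hq : mdeg d q = mdeg d p) :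
      callBelow rec q ∈ supported ℚ ℚ (reducedBelow d p) := by
    unfold callBelow
    split_ifs with h
    exacts [supported_mono (reducedBelow_mono (.inl h) hq) (ih q h), zero_mem _]
  have hsum (q : FreeMagma E) (g : FreeMagma E → FreeMagma E)
      (hg : ∀ ρ, mdeg d ρ = mdeg d q → mdeg d (g ρ) = mdeg d p) :
      ((callBelow rec q).sum fun ρ c => c • callBelow rec (g ρ)) ∈
        supported ℚ ℚ (reducedBelow d p) :=
    Submodule.sum_mem _ fun ρ hρ => Submodule.smul_mem _ _
      (hcall_of_mdeg_eq _ (hg ρ ((mem_supported ℚ _).1 (hcall q) hρ).2.2))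
  rcases p with _ | ⟨σ, _ | ⟨u, v⟩⟩
  · exact zero_mem _
  · exact zero_mem _
  refine sub_mem (add_mem (hsum _ _ ?_) (hsum _ _ ?_)) (hsum _ _ ?_) <;>
    intro ρ hρ <;> simp only [mdeg_mul, mul_eq] at hρ ⊢ <;> omega

noncomputable def normalMul :
    (FreeMagma E →₀ ℚ) →ₗ[ℚ] (FreeMagma E →₀ ℚ) →ₗ[ℚ] FreeMagma E →₀ ℚ :=
  linearCombination ℚ fun σ => linearCombination ℚ fun τ => mulNormalForm hwf (σ * τ)

theorem normalMul_single (σ τ : FreeMagma E) :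
    normalMul hwf (single σ 1) (single τ 1) = mulNormalForm hwf (σ * τ) := by
  simp [normalMul]

theorem normalMul_single_right (f : FreeMagma E →₀ ℚ) (τ : FreeMagma E) :
    normalMul hwf f (single τ 1) = f.sum fun σ c => c • mulNormalForm hwf (σ * τ) := by
  simp [normalMul, linearCombination_apply]

theorem normalMul_single_left (σ : FreeMagma E) (g : FreeMagma E →₀ ℚ) :
    normalMul hwf (single σ 1) g = g.sum fun τ c => c • mulNormalForm hwf (σ * τ) := by
  simp [normalMul, linearCombination_apply]

theorem normalMul_mem {p q : FreeMagma E} {f g : FreeMagma E →₀ ℚ}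
    (hf : f ∈ supported ℚ ℚ (reducedBelow d p)) (hg : g ∈ supported ℚ ℚ (reducedBelow d q)) :
    normalMul hwf f g ∈ supported ℚ ℚ (reducedBelow d (p * q)) := by
  refine map_mem_of_forall_single_mem ((normalMul hwf).flip g) fun σ hσ => ?_
  refine map_mem_of_forall_single_mem (normalMul hwf (single σ 1)) fun τ hτ => ?_
  obtain ⟨-, hσp, hσd⟩ := (mem_supported ℚ _).1 hf hσ
  obtain ⟨-, hτq, hτd⟩ := (mem_supported ℚ _).1 hg hτ
  rw [normalMul_single]
  exact supported_mono (reducedBelow_mono (hσp.mul_mul hτq) (by simp [hσd, hτd]))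
    (mulNormalForm_mem hwf _)

theorem mulNormalForm_mul_mul_of_lt (hd : ∀ a, 1 ≤ d a) {σ u v : FreeMagma E}
    (hu : MagmaLt d u σ) :
    mulNormalForm hwf (σ * (u * v)) =
      normalMul hwf (normalMul hwf (single σ 1) (single u 1)) (single v 1)
        + normalMul hwf (single u 1) (normalMul hwf (single σ 1) (single v 1))
        - normalMul hwf (normalMul hwf (single u 1) (single σ 1)) (single v 1) := by
  have := mdeg_pos hd σ
  have := mdeg_pos hd u
  have := mdeg_pos hd v
  set rec : ∀ q, MagmaLt d q (σ * (u * v)) → FreeMagma E →₀ ℚ := fun q _ => mulNormalForm hwf q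
  have hcall (q : FreeMagma E) (hq : MagmaLt d q (σ * (u * v))) :
      callBelow rec q = mulNormalForm hwf q :=
    dif_pos hq
  have hsupp {q ρ : FreeMagma E} (hρ : ρ ∈ (mulNormalForm hwf q).support) :
      MagmaLe d ρ q ∧ mdeg d ρ = mdeg d q :=
    ((mem_supported ℚ _).1 (mulNormalForm_mem hwf q) hρ).2
  have hright {q : FreeMagma E} (hq : mdeg d q = mdeg d σ + mdeg d u) :
      ((mulNormalForm hwf q).sum fun ρ c => c • callBelow rec (ρ * v)) =
        (mulNormalForm hwf q).sum fun ρ c => c • mulNormalForm hwf (ρ * v) :=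
    sum_congr fun ρ hρ => by
      rw [hcall _ (.branches (by simp [(hsupp hρ).2, hq]; omega) (by simp))]
  have hp : ¬ HasNondecreasingBranches d (σ * (u * v)) := fun h =>
    (HasNondecreasingBranches.mul_mul_iff.1 h).2.2.not_lt hu
  rw [mulNormalForm_eq, if_neg hp]
  change rewriteStep (FreeMagma.mul σ (FreeMagma.mul u v)) rec = _
  rw [rewriteStep, hcall _ (.deg (by simp; omega)), hcall _ (.deg (by simp; omega)),
    hcall _ (.deg (by simp; omega)), hright (by simp), hright (by simp; omega),
    normalMul_single, normalMul_single, normalMul_single, normalMul_single_right,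
    normalMul_single_left, normalMul_single_right]
  congr 2
  refine sum_congr fun ρ hρ => ?_
  rw [hcall _ ((MagmaLe.mul_mul (.refl u) (hsupp hρ).1).trans_lt (hu.mul_mul_swap v))]

noncomputable def normalForm : FreeMagma E → FreeMagma E →₀ ℚ
  | FreeMagma.of a => single (of a) 1
  | FreeMagma.mul x y => normalMul hwf (normalForm x) (normalForm y)

theorem normalForm_mem (z : FreeMagma E) :
    normalForm hwf z ∈ supported ℚ ℚ (reducedBelow d z) := by
  induction z with
  | ih1 a => exact single_mem_supported_reducedBelow trivial
  | ih2 x y hx hy => exact normalMul_mem hwf hx hy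

theorem normalForm_of_hasNondecreasingBranches {z : FreeMagma E}
    (hz : HasNondecreasingBranches d z) : normalForm hwf z = single z 1 := by
  induction z with
  | ih1 a => rfl
  | ih2 x y hx hy =>
    change normalMul hwf (normalForm hwf x) (normalForm hwf y) = _
    rw [hx hz.left, hy hz.right, normalMul_single, mulNormalForm_of_hasNondecreasingBranches hwf hz]

noncomputable def normalFormMap : FreeNonUnitalNonAssocAlgebra ℚ E →ₗ[ℚ] FreeMagma E →₀ ℚ :=
  linearCombination ℚ (normalForm hwf) ∘ₗ (MonoidAlgebra.coeffLinearEquiv ℚ).toLinearMap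

theorem normalFormMap_single (z : FreeMagma E) (c : ℚ) :
    normalFormMap hwf (MonoidAlgebra.single z c) = c • normalForm hwf z := by
  simp [normalFormMap]

theorem normalFormMap_mul (f g : FreeNonUnitalNonAssocAlgebra ℚ E) :
    normalFormMap hwf (f * g) = normalMul hwf (normalFormMap hwf f) (normalFormMap hwf g) := by
  induction f using MonoidAlgebra.induction_linear with
  | zero => simp
  | add f₁ f₂ h₁ h₂ => simp [add_mul, h₁, h₂]
  | single σ a =>
    induction g using MonoidAlgebra.induction_linear with
    | zero => simp
    | add g₁ g₂ h₁ h₂ => simp [mul_add, h₁, h₂]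
    | single τ b =>
      simp [MonoidAlgebra.single_mul_single, normalFormMap_single, normalForm, smul_smul, mul_comm]

theorem normalFormMap_mem (f : FreeNonUnitalNonAssocAlgebra ℚ E) :
    normalFormMap hwf f ∈ supported ℚ ℚ {ρ | HasNondecreasingBranches d ρ} :=
  Submodule.sum_mem _ fun z _ => Submodule.smul_mem _ _ <|
    supported_mono (fun _ h => h.1) (normalForm_mem hwf z)

theorem normalFormMap_apply_of_isMaxTermWrt {f : FreeNonUnitalNonAssocAlgebra ℚ E}
    {σ : FreeMagma E} (hmax : IsMaxTermWrt d f σ) (hσ : HasNondecreasingBranches d σ) :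
    normalFormMap hwf f σ = f.coeff σ := by
  simp only [normalFormMap, LinearMap.coe_comp, Function.comp_apply, LinearEquiv.coe_coe,
    MonoidAlgebra.coeffLinearEquiv_apply, linearCombination_apply, finsetSum_apply, Finsupp.sum]
  rw [Finset.sum_eq_single σ]
  · simp [normalForm_of_hasNondecreasingBranches hwf hσ]
  · intro z hz hne
    have hσz : σ ∉ reducedBelow d z := fun h => h.2.1.not_lt (hmax.2 z hz hne)
    simp [(mem_supported' ℚ _).1 (normalForm_mem hwf z) σ hσz]
  · exact fun h => absurd hmax.1 h

end NormalForm

section PreLieIdentity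

open FreeMagma Finsupp

variable {E : Type*} [LinearOrder E] {d : E → ℕ} (hwf : WellFounded (MagmaLt d))

theorem preLieAssoc_normalMul_of_lt (hd : ∀ a, 1 ≤ d a) {σ u v : FreeMagma E}
    (huv : HasNondecreasingBranches d (u * v)) (hu : MagmaLt d u σ) :
    (normalMul hwf).preLieAssoc (single σ 1) (single u 1) (single v 1) = 0 := by
  rw [LinearMap.preLieAssoc_apply, normalMul_single hwf u v,
    mulNormalForm_of_hasNondecreasingBranches hwf huv, normalMul_single,
    mulNormalForm_mul_mul_of_lt hwf hd hu]
  abel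

def PreLieBelow (p : FreeMagma E) : Prop :=
  ∀ a b c, HasNondecreasingBranches d a → HasNondecreasingBranches d b →
    HasNondecreasingBranches d c → MagmaLt d (a * (b * c)) p → MagmaLt d (b * (a * c)) p →
    (normalMul hwf).preLieAssoc (single a 1) (single b 1) (single c 1) = 0

theorem PreLieBelow.preLieAssoc_eq_zero {hwf : WellFounded (MagmaLt d)} {p a b c : FreeMagma E}
    (ih : PreLieBelow hwf p) {f g h : FreeMagma E →₀ ℚ}
    (hf : f ∈ supported ℚ ℚ (reducedBelow d a)) (hg : g ∈ supported ℚ ℚ (reducedBelow d b))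
    (hh : h ∈ supported ℚ ℚ (reducedBelow d c)) (habc : MagmaLt d (a * (b * c)) p)
    (hbac : MagmaLt d (b * (a * c)) p) :
    (normalMul hwf).preLieAssoc f g h = 0 := by
  refine apply₃_eq_zero_of_forall_single _ fun a' ha' b' hb' c' hc' => ?_
  obtain ⟨ha', ha'a, -⟩ := (mem_supported ℚ _).1 hf ha'
  obtain ⟨hb', hb'b, -⟩ := (mem_supported ℚ _).1 hg hb'
  obtain ⟨hc', hc'c, -⟩ := (mem_supported ℚ _).1 hh hc'
  exact ih a' b' c' ha' hb' hc' ((ha'a.mul_mul (hb'b.mul_mul hc'c)).trans_lt habc)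
    ((hb'b.mul_mul (ha'a.mul_mul hc'c)).trans_lt hbac)

/-- The case of the induction where `y * z` is not normal. Expanding `A(x, y, u ⋆ v)` by
`LinearMap.preLieAssoc_apply_mul` leaves two instances of the rewriting rule and associators
whose leading monomials are `≺ x * (y * (u * v))`. -/
theorem preLieAssoc_normalMul_of_lt_of_lt (hd : ∀ a, 1 ≤ d a) {x y u v : FreeMagma E}
    (hx : HasNondecreasingBranches d x) (hy : HasNondecreasingBranches d y)
    (huv : HasNondecreasingBranches d (u * v)) (hyx : MagmaLt d y x) (huy : MagmaLt d u y)
    (ih : PreLieBelow hwf (x * (y * (u * v)))) :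
    (normalMul hwf).preLieAssoc (single x 1) (single y 1) (single (u * v) 1) = 0 := by
  have hux := huy.trans hyx
  have := mdeg_pos hd u
  have := mdeg_pos hd v
  have hs := @single_mem_supported_reducedBelow E _ d
  have hm {a b : FreeMagma E} (ha : HasNondecreasingBranches d a)
      (hb : HasNondecreasingBranches d b) :=
    normalMul_mem hwf (hs ha) (hs hb)
  have hfewer {a w : FreeMagma E} (h : mdeg d a + mdeg d w = mdeg d x + mdeg d y + mdeg d u) :
      MagmaLt d (a * (w * v)) (x * (y * (u * v))) :=
    .branches (by simp; omega) (by simp)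
  have hlower {a b c : FreeMagma E}
      (h : mdeg d a + mdeg d b + mdeg d c < mdeg d x + mdeg d y + mdeg d u + mdeg d v) :
      MagmaLt d (a * (b * c)) (x * (y * (u * v))) :=
    .deg (by simp; omega)
  have hxuy := (huy.mul_mul_swap v).mul_left x
  have hyux := ((hux.mul_mul_swap v).mul_left y).trans (hyx.mul_mul_swap (u * v))
  rw [← mulNormalForm_of_hasNondecreasingBranches hwf huv, ← normalMul_single,
    LinearMap.preLieAssoc_apply_mul, preLieAssoc_normalMul_of_lt hwf hd huv hux,
    preLieAssoc_normalMul_of_lt hwf hd huv huy,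
    ih.preLieAssoc_eq_zero (hs hx) (hm hy huv.left) (hs huv.right)
      (hfewer (by simp only [mdeg_mul]; omega)) (hfewer (by simp only [mdeg_mul]; omega)),
    ih.preLieAssoc_eq_zero (hs hx) (hm huv.left hy) (hs huv.right)
      (hfewer (by simp only [mdeg_mul]; omega)) (hfewer (by simp only [mdeg_mul]; omega)),
    ih.preLieAssoc_eq_zero (hs hy) (hm hx huv.left) (hs huv.right)
      (hfewer (by simp only [mdeg_mul]; omega)) (hfewer (by simp only [mdeg_mul]; omega)),
    ih.preLieAssoc_eq_zero (hs hy) (hm huv.left hx) (hs huv.right)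
      (hfewer (by simp only [mdeg_mul]; omega)) (hfewer (by simp only [mdeg_mul]; omega)),
    ih.preLieAssoc_eq_zero (hm hx hy) (hs huv.left) (hs huv.right)
      (hfewer (by simp only [mdeg_mul])) (hfewer (by simp only [mdeg_mul]; omega)),
    ih.preLieAssoc_eq_zero (hm hy hx) (hs huv.left) (hs huv.right)
      (hfewer (by simp only [mdeg_mul]; omega)) (hfewer (by simp only [mdeg_mul]; omega)),
    ih.preLieAssoc_eq_zero (hs hx) (hs huv.left) (hm hy huv.right) hxuy
      ((hux.mul_mul_swap (y * v)).trans hxuy),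
    ih.preLieAssoc_eq_zero (hs hy) (hs huv.left) (hm hx huv.right) hyux
      ((huy.mul_mul_swap (x * v)).trans hyux),
    ih.preLieAssoc_eq_zero (hs hx) (hs hy) (hs huv.right) (hlower (by omega)) (hlower (by omega)),
    ih.preLieAssoc_eq_zero (hs hx) (hs hy) (hs huv.left) (hlower (by omega)) (hlower (by omega)),
    ih.preLieAssoc_eq_zero (hs huv.left) (hs hx) (hs hy) (hlower (by omega)) (hlower (by omega)),
    ih.preLieAssoc_eq_zero (hs huv.left) (hs hy) (hs hx) (hlower (by omega)) (hlower (by omega))]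
  simp

theorem preLieAssoc_normalMul_single (hd : ∀ a, 1 ≤ d a) {x y z : FreeMagma E}
    (hx : HasNondecreasingBranches d x) (hy : HasNondecreasingBranches d y)
    (hz : HasNondecreasingBranches d z) :
    (normalMul hwf).preLieAssoc (single x 1) (single y 1) (single z 1) = 0 := by
  have hsymm {a b c : FreeMagma E}
      (h₁ : MagmaLt d b a →
        (normalMul hwf).preLieAssoc (single a 1) (single b 1) (single c 1) = 0)
      (h₂ : MagmaLt d a b →
        (normalMul hwf).preLieAssoc (single b 1) (single a 1) (single c 1) = 0) :
      (normalMul hwf).preLieAssoc (single a 1) (single b 1) (single c 1) = 0 := by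
    rcases MagmaLt.trichotomous (d := d) a b with hab | rfl | hab
    · rw [← neg_eq_zero, ← LinearMap.preLieAssoc_swap]
      exact h₂ hab
    · exact LinearMap.preLieAssoc_self _ _ _
    · exact h₁ hab
  have hordered (p : FreeMagma E) : ∀ x y z, HasNondecreasingBranches d x →
      HasNondecreasingBranches d y → HasNondecreasingBranches d z → MagmaLt d y x →
      x * (y * z) = p → (normalMul hwf).preLieAssoc (single x 1) (single y 1) (single z 1) = 0 := by
    induction p using hwf.induction with
    | _ p ih =>
    rintro x y z hx hy hz hyx rfl
    by_cases hyz : HasNondecreasingBranches d (y * z)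
    · exact preLieAssoc_normalMul_of_lt hwf hd hyz hyx
    obtain ⟨u, v, rfl, huy⟩ := hy.exists_lt_of_not_mul hz hyz
    refine preLieAssoc_normalMul_of_lt_of_lt hwf hd hx hy hz hyx huy
      fun a b c ha hb hc h₁ h₂ => hsymm ?_ ?_
    · exact fun hba => ih _ h₁ a b c ha hb hc hba rfl
    · exact fun hab => ih _ h₂ b a c hb ha hc hab rfl
  exact hsymm (fun h => hordered _ x y z hx hy hz h rfl) (fun h => hordered _ y x z hy hx hz h rfl)

theorem preLieAssoc_normalMul (hd : ∀ a, 1 ≤ d a) {f g h : FreeMagma E →₀ ℚ}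
    (hf : f ∈ supported ℚ ℚ {ρ | HasNondecreasingBranches d ρ})
    (hg : g ∈ supported ℚ ℚ {ρ | HasNondecreasingBranches d ρ})
    (hh : h ∈ supported ℚ ℚ {ρ | HasNondecreasingBranches d ρ}) :
    (normalMul hwf).preLieAssoc f g h = 0 :=
  apply₃_eq_zero_of_forall_single _ fun _ hx _ hy _ hz =>
    preLieAssoc_normalMul_single hwf hd ((mem_supported ℚ _).1 hf hx)
      ((mem_supported ℚ _).1 hg hy) ((mem_supported ℚ _).1 hh hz)

theorem normalFormMap_eq_zero_of_mem (hd : ∀ a, 1 ≤ d a) {f : FreeNonUnitalNonAssocAlgebra ℚ E}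
    (hf : f ∈ twoSidedIdealGen (preLieAssocSet E)) : normalFormMap hwf f = 0 := by
  refine mem_twoSidedIdealGen.1 hf (LinearMap.ker (normalFormMap hwf))
    (fun a x hx => ⟨?_, ?_⟩) ?_
  · simp [normalFormMap_mul, LinearMap.mem_ker.1 hx]
  · simp [normalFormMap_mul, LinearMap.mem_ker.1 hx]
  · rintro _ ⟨x, y, z, rfl⟩
    simp only [SetLike.mem_coe, LinearMap.mem_ker, map_add, map_sub, normalFormMap_mul]
    rw [← LinearMap.preLieAssoc_apply]
    exact preLieAssoc_normalMul hwf hd (normalFormMap_mem hwf x) (normalFormMap_mem hwf y)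
      (normalFormMap_mem hwf z)

end PreLieIdentity

theorem outTermSet_preLie_ideal_eq_nondecreasing_general (E : Type*) [LinearOrder E]
    (d : E → ℕ) (hd : ∀ a : E, 1 ≤ d a)
    (hfib : ∀ n : ℕ, {a : E | d a = n}.Finite) :
    (maxTermSetWrt d (twoSidedIdealGen (preLieAssocSet E)))ᶜ =
      {σ : FreeMagma E | HasNondecreasingBranches d σ} := by
  have hwf := MagmaLt.wellFounded hd hfib
  ext σ
  refine ⟨fun hσ => by_contra fun h => hσ (mem_maxTermSetWrt_of_not_hasNondecreasingBranches h),
    fun hσ ⟨f, hf, hmax⟩ => ?_⟩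
  have hcoeff := normalFormMap_apply_of_isMaxTermWrt hwf hmax hσ
  rw [normalFormMap_eq_zero_of_mem hwf hd hf] at hcoeff
  exact Finsupp.mem_support_iff.1 hmax.1 hcoeff.symm

/-- `O(J)`, the complement of the set of maximal terms of elements of the ideal `J`
generated by the pre-Lie associators, is exactly the set of monomials with
nondecreasing branches. -/
theorem outTermSet_preLie_ideal_eq_nondecreasing (E : Type*) [LinearOrder E]
    (hwo : WellFoundedLT E) (d : E → ℕ) (hd : ∀ a : E, 1 ≤ d a)
    (hfib : ∀ n : ℕ, {a : E | d a = n}.Finite)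
    (href : ∀ a b : E, d a < d b → a < b) :
    (maxTermSetWrt d (twoSidedIdealGen (preLieAssocSet E)))ᶜ =
      {σ : FreeMagma E | HasNondecreasingBranches d σ} :=
  outTermSet_preLie_ideal_eq_nondecreasing_general E d hd hfib
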